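/- Let n ≥ 1 and d ≥ 1 be integers. There exist constants C_1 = C_1(n,d) > 0 and C_3 = C_3(n,d) > 0, depending only on n and d, with the following property: for every C^{d+1} function f on B^n with M_0(f) = 1 and every C^{d+1} curve ω : [-1,1] → B^n satisfying 0 < ‖dω(t)‖ ≤ 1 for all t ∈ [-1,1] and ν_d(ω) ≤ C_3, setting g(t) = f(ω(t)), one has M_{d+1}(f) ≥ (1/2) · C_1 · ( M_{d+1}(g) − 1/10 ). -/

import Mathlib

open scoped RealInnerProductSpace
noncomputable section

/-- Euclidean space ℝ^n. -/
abbrev En (n : ℕ) := EuclideanSpace ℝ (Fin n)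

/-- Maximum of absolute values of all partial derivatives of order `l` of `f` at `z`. -/
def partialMax (n l : ℕ) (f : En n → ℝ) (z : En n) : ℝ :=
  ⨆ α : Fin l → Fin n,
    |iteratedFDeriv ℝ l f z (fun j => EuclideanSpace.single (α j) (1 : ℝ))|

/-- `M_l(f)`: sup over the closed unit ball of the max partial derivative of order `l`. -/
def Ml (n l : ℕ) (f : En n → ℝ) : ℝ :=
  ⨆ z : Metric.closedBall (0 : En n) 1, partialMax n l f (z : En n)

/-- The class `U_d(Z)` of normalized `C^{d+1}` functions vanishing on `Z`. -/
def Ud (n d : ℕ) (Z : Set (En n)) : Set (En n → ℝ) :=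
  {f | ContDiff ℝ (d + 1 : ℕ) f ∧ (∀ z ∈ Z, f z = 0) ∧ Ml n 0 f = 1}

/-- The `d`-rigidity `RG_d(Z)`. -/
def RG (n d : ℕ) (Z : Set (En n)) : ℝ :=
  sInf (Ml n (d + 1) '' Ud n d Z)

/-- `‖d^k ω(t)‖`: max over coordinates of the `k`-th derivative of the curve `ω` at `t`. -/
def curveDer (n k : ℕ) (ω : ℝ → En n) (t : ℝ) : ℝ :=
  ⨆ i : Fin n, |iteratedDeriv k ω t i|

/-- `ν_d(ω,t)`: max over `2 ≤ k ≤ d+1` of `‖d^k ω(t)‖`. -/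
def nuAt (n d : ℕ) (ω : ℝ → En n) (t : ℝ) : ℝ :=
  ⨆ k : {k : ℕ // 2 ≤ k ∧ k ≤ d + 1}, curveDer n (k : ℕ) ω t

/-- `ν_d(ω)`: max over `t ∈ [-1,1]` of `ν_d(ω,t)`. -/
def nuCurve (n d : ℕ) (ω : ℝ → En n) : ℝ :=
  ⨆ t : Set.Icc (-1 : ℝ) 1, nuAt n d ω (t : ℝ)

/-- `M_k(ω)`: max over `t ∈ [-1,1]` of `‖d^k ω(t)‖`. -/
def Mkc (n k : ℕ) (ω : ℝ → En n) : ℝ :=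
  ⨆ t : Set.Icc (-1 : ℝ) 1, curveDer n k ω (t : ℝ)

/-- Membership in the family `Ω_d(Z,z₀)` of admissible curves. -/
def InOmega (n d : ℕ) (Z : Set (En n)) (z₀ : En n) (ω : ℝ → En n) : Prop :=
  ContDiff ℝ (d + 1 : ℕ) ω ∧
  (∀ t ∈ Set.Icc (-1 : ℝ) 1, ω t ∈ Metric.closedBall (0 : En n) 1) ∧
  (∃ t ∈ Set.Icc (-1 : ℝ) 1, ω t = z₀) ∧
  (∃ z : Fin (d + 1) → En n, Function.Injective z ∧
    ∀ j, z j ∈ Z ∧ ∃ t ∈ Set.Icc (-1 : ℝ) 1, ω t = z j) ∧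
  (∀ t ∈ Set.Icc (-1 : ℝ) 1, 0 < curveDer n 1 ω t ∧ curveDer n 1 ω t ≤ 1) ∧
  nuCurve n d ω ≤ 1

/-- Pointwise `d`-thickness `ν_d(Z,z₀)`. -/
def nuZpt (n d : ℕ) (Z : Set (En n)) (z₀ : En n) : ℝ :=
  sInf (nuCurve n d '' {ω | InOmega n d Z z₀ ω})

/-- `d`-thickness `ν_d(Z)`. -/
def nuZ (n d : ℕ) (Z : Set (En n)) : ℝ :=
  ⨆ z₀ : Metric.sphere (0 : En n) 1, nuZpt n d Z (z₀ : En n)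

/-- Sup of `|P|` over a set `S`. -/
def polySup (n : ℕ) (P : MvPolynomial (Fin n) ℝ) (S : Set (En n)) : ℝ :=
  ⨆ x : S, |MvPolynomial.eval (fun i => (x : En n) i) P|

/-- The Remez constant `R_d(Z)` (value in `[1,∞]`). -/
def Remez (n d : ℕ) (Z : Set (En n)) : ENNReal :=
  sInf {K : ENNReal | 1 ≤ K ∧ ∀ P : MvPolynomial (Fin n) ℝ, P.totalDegree ≤ d →
    ENNReal.ofReal (polySup n P (Metric.closedBall (0 : En n) 1)) ≤
      K * ENNReal.ofReal (polySup n P Z)}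

/-- The inverse Remez constant `R̂_d(Z) = 1/R_d(Z)` (zero when `R_d(Z) = ∞`). -/
def invRemez (n d : ℕ) (Z : Set (En n)) : ℝ :=
  ((Remez n d Z)⁻¹).toReal

/-- The closed axis-parallel grid `ε`-cube with index `α`. -/
def gridCube (n : ℕ) (ε : ℝ) (α : Fin n → ℤ) : Set (En n) :=
  {x | ∀ i, (α i : ℝ) * ε ≤ x i ∧ x i ≤ ((α i : ℝ) + 1) * ε}

/-- The covering number `M(ε,Z)`: the number of grid `ε`-cubes meeting `Z`. -/
def covNum (n : ℕ) (ε : ℝ) (Z : Set (En n)) : ℕ :=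
  Set.ncard {α : Fin n → ℤ | (gridCube n ε α ∩ Z).Nonempty}

/-- Box (entropy) dimension of `Z`. -/
def dimE (n : ℕ) (Z : Set (En n)) : ℝ :=
  Filter.limsup (fun ε : ℝ => Real.log (covNum n ε Z) / Real.log (1 / ε))
    (nhdsWithin 0 (Set.Ioi 0))

/-- The straight line through `z₀` with direction `v`. -/
def lineThrough (n : ℕ) (z₀ v : En n) : Set (En n) :=
  {x | ∃ t : ℝ, x = z₀ + t • v}

/-- Orthogonal projection of `p` onto the line through `z₀` with unit direction `v`. -/
def projLine (n : ℕ) (z₀ v p : En n) : En n :=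
  z₀ + (inner ℝ (p - z₀) v : ℝ) • v

/-- Distance from `p` to the line through `z₀` with unit direction `v`. -/
def distLine (n : ℕ) (z₀ v p : En n) : ℝ :=
  dist p (projLine n z₀ v p)

/-- `ρ(ℓ,𝒵)`: max distance of the `d+1` points to the line. -/
def rhoLine (n d : ℕ) (z₀ v : En n) (z : Fin (d + 1) → En n) : ℝ :=
  ⨆ i, distLine n z₀ v (z i)

/-- `κ(ℓ,𝒵)`: min distance between projections of the `d+1` points onto the line. -/
def kappaLine (n d : ℕ) (z₀ v : En n) (z : Fin (d + 1) → En n) : ℝ :=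
  ⨅ p : {q : Fin (d + 1) × Fin (d + 1) // q.1 ≠ q.2},
    dist (projLine n z₀ v (z (p : Fin (d + 1) × Fin (d + 1)).1))
      (projLine n z₀ v (z (p : Fin (d + 1) × Fin (d + 1)).2))

/-- Pointwise approximate `ad`-thickness `ν̄_d(Z,z₀)`. -/
def barNuZpt (n d : ℕ) (Z : Set (En n)) (z₀ : En n) : ℝ :=
  sInf {m : ℝ | ∃ v : En n, ‖v‖ = 1 ∧
    (lineThrough n z₀ v ∩ Metric.closedBall (0 : En n) (1 / 3)).Nonempty ∧
    ∃ z : Fin (d + 1) → En n, Function.Injective z ∧ (∀ i, z i ∈ Z) ∧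
      m = rhoLine n d z₀ v z / (kappaLine n d z₀ v z) ^ d}

/-- Approximate `ad`-thickness `ν̄_d(Z)`. -/
def barNuZ (n d : ℕ) (Z : Set (En n)) : ℝ :=
  ⨆ z₀ : Metric.sphere (0 : En n) 1, barNuZpt n d Z (z₀ : En n)

/-- The axis-parallel cube with corner `a` and side `s`. -/
def cube (n : ℕ) (a : En n) (s : ℝ) : Set (En n) :=
  {x | ∀ i, a i ≤ x i ∧ x i ≤ a i + s}

/-- `Z` is `h`-dense in the cube with corner `a` and side `s`. -/
def hDense (n : ℕ) (a : En n) (s h : ℝ) (Z : Set (En n)) : Prop :=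
  ∀ b : En n, (∀ i, a i ≤ b i ∧ b i + h ≤ a i + s) → (Z ∩ cube n b h).Nonempty

/-- `μ_d(f,z)`: max over `1 ≤ k ≤ d` of the order-`k` partial derivatives of `f` at `z`. -/
def muF (n d : ℕ) (f : En n → ℝ) (z : En n) : ℝ :=
  ⨆ k : {k : ℕ // 1 ≤ k ∧ k ≤ d}, partialMax n (k : ℕ) f z

/-- `μ_d(f)`: max over the unit ball of `μ_d(f,z)`. -/
def muFglob (n d : ℕ) (f : En n → ℝ) : ℝ :=
  ⨆ z : Metric.closedBall (0 : En n) 1, muF n d f (z : En n)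

/-- `M_m(g)` for a function of one variable on `[-1,1]`. -/
def MIcc (m : ℕ) (g : ℝ → ℝ) : ℝ :=
  ⨆ t : Set.Icc (-1 : ℝ) 1, |iteratedDeriv m g (t : ℝ)|

end

/-!
By Faà di Bruno, `g⁽ᵈ⁺¹⁾(t)` is a sum over the ordered partitions `c` of `d + 1` of
`D^{|c|} f (ω t)` applied to the derivatives of `ω` whose orders are the block sizes of `c`.
The partition into singletons contributes at most `√n ^ (d + 1) ‖D^{d+1} f‖`. Every other
partition has a block of size `≥ 2`, hence a factor `‖ω⁽ᵏ⁾(t)‖ ≤ √n ν_d(ω) ≤ √n C₃`, while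
`‖D^j f‖ ≤ K (1 + ‖D^{d+1} f‖)` for all `j ≤ d + 1` by a Landau–Kolmogorov interpolation on the
ball between `|f| ≤ 1` and `D^{d+1} f`. So `M_{d+1}(g) ≤ 1/20 + B M_{d+1}(f)` with `B`
depending only on `n` and `d`.
-/

open Set Metric

section Interpolation

variable {d : ℕ} {x : ℕ → ℝ}

theorem pow_mul_le_of_interpolation (hx : ∀ j, 0 ≤ x j) (h0 : x 0 ≤ 1)
    (hstep : ∀ i, i + 1 ≤ d → ∀ ε : ℝ, 0 < ε → ε ≤ 1 →
      x (i + 1) ≤ 2 / ε * x i + 2 * ε * x (i + 2)) :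
    ∀ j ≤ d, ∀ ε : ℝ, 0 < ε → ε ≤ 1 →
      ε ^ j * x j ≤ 16 ^ (j * j) + 4 * ε ^ (j + 1) * x (j + 1) := by
  intro j
  induction j with
  | zero =>
    intro _ ε hε _
    have := mul_nonneg hε.le (hx 1)
    simp only [pow_zero, one_mul, mul_zero, zero_add, pow_one]
    linarith
  | succ i ih =>
    intro hi ε hε hε1
    -- the induction hypothesis at the finer scale `ε / 16` absorbs the term `ε ^ i * x i`
    have hfine := ih (by omega) (ε / 16) (by positivity) (by linarith)
    have hlow : ε ^ i * x i ≤ 16 ^ i * 16 ^ (i * i) + ε ^ (i + 1) * x (i + 1) / 4 := by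
      have h16 : (16 : ℝ) ^ i * (ε / 16) ^ i = ε ^ i := by rw [← mul_pow]; ring_nf
      calc ε ^ i * x i = 16 ^ i * ((ε / 16) ^ i * x i) := by rw [← mul_assoc, h16]
        _ ≤ _ := mul_le_mul_of_nonneg_left hfine (by positivity)
        _ = _ := by rw [div_pow, pow_succ]; field_simp; ring
    have hcur : ε ^ (i + 1) * x (i + 1) ≤ 2 * (ε ^ i * x i) + 2 * ε ^ (i + 2) * x (i + 2) :=
      calc _ ≤ _ := mul_le_mul_of_nonneg_left (hstep i hi ε hε hε1) (by positivity)
        _ = _ := by field_simp; ring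
    have hconst : 4 * (16 : ℝ) ^ i * 16 ^ (i * i) ≤ 16 ^ ((i + 1) * (i + 1)) := by
      have : 4 * (16 : ℝ) ^ i ≤ 16 ^ (2 * i + 1) := by
        rw [pow_succ, pow_mul]
        linarith [pow_le_pow_left₀ (by norm_num) (by norm_num : (16:ℝ) ≤ 16 ^ 2) i,
          pow_nonneg (by norm_num : (0:ℝ) ≤ 16) i]
      calc _ ≤ (16 : ℝ) ^ (2 * i + 1) * 16 ^ (i * i) := by gcongr
        _ = _ := by rw [← pow_add]; ring_nf
    linarith

theorem le_of_interpolation (hx : ∀ j, 0 ≤ x j) (h0 : x 0 ≤ 1)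
    (hstep : ∀ i, i + 1 ≤ d → ∀ ε : ℝ, 0 < ε → ε ≤ 1 →
      x (i + 1) ≤ 2 / ε * x i + 2 * ε * x (i + 2)) {j : ℕ} (hj : j ≤ d + 1) :
    x j ≤ (16 ^ (d * d) + 4) ^ (d + 1) * (1 + x (d + 1)) := by
  set L : ℝ := 16 ^ (d * d) + 4
  have hL : 1 ≤ L := by
    simp only [L]
    linarith [one_le_pow₀ (by norm_num : (1:ℝ) ≤ 16) (n := d * d)]
  have hT := hx (d + 1)
  have hdown : ∀ i ≤ d + 1, x (d + 1 - i) ≤ L ^ i * (1 + x (d + 1)) := by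
    intro i
    induction i with
    | zero => intro _; simp
    | succ i ih =>
      intro hi
      have hone := pow_mul_le_of_interpolation hx h0 hstep (d - i) (by omega) 1 one_pos le_rfl
      rw [one_pow, one_mul, one_pow, mul_one, show d - i + 1 = d + 1 - i by omega] at hone
      have hpow : (16 : ℝ) ^ ((d - i) * (d - i)) ≤ 16 ^ (d * d) :=
        pow_le_pow_right₀ (by norm_num) (Nat.mul_le_mul (Nat.sub_le d i) (Nat.sub_le d i))
      have hbig : 1 ≤ L ^ i * (1 + x (d + 1)) :=
        one_le_mul_of_one_le_of_one_le (one_le_pow₀ hL) (by linarith)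
      rw [show d + 1 - (i + 1) = d - i by omega, pow_succ', mul_assoc]
      calc x (d - i) ≤ 16 ^ (d * d) * 1 + 4 * (L ^ i * (1 + x (d + 1))) := by
            linarith [ih (by omega)]
        _ ≤ 16 ^ (d * d) * (L ^ i * (1 + x (d + 1))) + 4 * (L ^ i * (1 + x (d + 1))) := by
            gcongr
        _ = L * (L ^ i * (1 + x (d + 1))) := by ring
  calc x j = x (d + 1 - (d + 1 - j)) := by rw [Nat.sub_sub_self hj]
    _ ≤ L ^ (d + 1 - j) * (1 + x (d + 1)) := hdown _ (Nat.sub_le _ _)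
    _ ≤ L ^ (d + 1) * (1 + x (d + 1)) := by gcongr; omega

end Interpolation

theorem mul_norm_deriv_zero_le {F : Type*} [NormedAddCommGroup F] [NormedSpace ℝ F]
    {φ φ' : ℝ → F} {h A B : ℝ} (hh : 0 < h)
    (hφ : ∀ s ∈ Icc 0 h, HasDerivWithinAt φ (φ' s) (Icc 0 h) s)
    (hA : ∀ s ∈ Icc 0 h, ‖φ s‖ ≤ A) (hB : ∀ s ∈ Ico 0 h, ‖φ' s - φ' 0‖ ≤ B) :
    h * ‖φ' 0‖ ≤ 2 * A + B * h := by
  -- the mean value inequality for `s ↦ φ s - s • φ' 0` bounds the Taylor remainder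
  have hrem := norm_image_sub_le_of_norm_deriv_le_segment'
    (f := fun s => φ s - s • φ' 0)
    (fun s hs => (hφ s hs).sub ((hasDerivWithinAt_id s _).smul_const (φ' 0)))
    (by simpa using hB) h (right_mem_Icc.2 hh.le)
  have hdecomp : h • φ' 0 = φ h - φ 0 - ((φ h - h • φ' 0) - (φ 0 - (0 : ℝ) • φ' 0)) := by
    simp
  calc h * ‖φ' 0‖ = ‖h • φ' 0‖ := by rw [norm_smul, Real.norm_of_nonneg hh.le]
    _ ≤ ‖φ h‖ + ‖φ 0‖ + B * (h - 0) := by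
      rw [hdecomp]
      exact (norm_sub_le _ _).trans (add_le_add (norm_sub_le _ _) hrem)
    _ ≤ 2 * A + B * h := by
      linarith [hA h (right_mem_Icc.2 hh.le), hA 0 (left_mem_Icc.2 hh.le)]

section BallDerivatives

variable {E F : Type*} [NormedAddCommGroup E] [NormedSpace ℝ E] [NormedAddCommGroup F]
  [NormedSpace ℝ F] {f : E → F}

noncomputable def derivNormSup (j : ℕ) (f : E → F) : ℝ :=
  ⨆ z : closedBall (0 : E) 1, ‖iteratedFDeriv ℝ j f z‖

theorem derivNormSup_nonneg (j : ℕ) (f : E → F) : 0 ≤ derivNormSup j f :=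
  Real.iSup_nonneg fun _ => norm_nonneg _

theorem norm_fderiv_iteratedFDeriv_sub (j : ℕ) (y z : E) :
    ‖fderiv ℝ (iteratedFDeriv ℝ j f) y - fderiv ℝ (iteratedFDeriv ℝ j f) z‖ =
      ‖iteratedFDeriv ℝ (j + 1) f y - iteratedFDeriv ℝ (j + 1) f z‖ := by
  rw [iteratedFDeriv_succ_eq_comp_left, Function.comp_apply, Function.comp_apply,
    ← LinearIsometryEquiv.map_sub, LinearIsometryEquiv.norm_map]

variable [ProperSpace E] {N : ℕ}

theorem norm_iteratedFDeriv_le_derivNormSup (hf : ContDiff ℝ N f) {j : ℕ} (hj : j ≤ N) {z : E}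
    (hz : z ∈ closedBall (0 : E) 1) : ‖iteratedFDeriv ℝ j f z‖ ≤ derivNormSup j f := by
  have hcont : Continuous fun z => ‖iteratedFDeriv ℝ j f z‖ :=
    (hf.continuous_iteratedFDeriv (by exact_mod_cast hj)).norm
  have hbdd := (isCompact_closedBall (0 : E) 1).bddAbove_image hcont.continuousOn
  rw [image_eq_range] at hbdd
  exact le_ciSup hbdd ⟨z, hz⟩

theorem norm_iteratedFDeriv_sub_le (hf : ContDiff ℝ N f) {j : ℕ} (hj : j + 1 ≤ N) {y z : E}
    (hy : y ∈ closedBall (0 : E) 1) (hz : z ∈ closedBall (0 : E) 1) :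
    ‖iteratedFDeriv ℝ j f y - iteratedFDeriv ℝ j f z‖ ≤ derivNormSup (j + 1) f * ‖y - z‖ := by
  refine (convex_closedBall 0 1).norm_image_sub_le_of_norm_fderiv_le
    (fun w _ => (hf.differentiable_iteratedFDeriv (by exact_mod_cast hj)).differentiableAt)
    (fun w hw => ?_) hz hy
  rw [norm_fderiv_iteratedFDeriv]
  exact norm_iteratedFDeriv_le_derivNormSup hf hj hw

theorem derivNormSup_succ_le (hf : ContDiff ℝ N f) {i : ℕ} (hi : i + 2 ≤ N) {ε : ℝ} (hε : 0 < ε)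
    (hε1 : ε ≤ 1) :
    derivNormSup (i + 1) f ≤ 2 / ε * derivNormSup i f + 2 * ε * derivNormSup (i + 2) f := by
  have hN₀ := derivNormSup_nonneg i f
  have hN₂ := derivNormSup_nonneg (i + 2) f
  refine Real.iSup_le (fun ⟨z, hz⟩ => ?_) (by positivity)
  have hz1 : ‖z‖ ≤ 1 := mem_closedBall_zero_iff.1 hz
  -- pull `z` towards the centre so that segments of length `ε` from it stay in the ball
  set z' := (1 - ε) • z
  have hz' : ‖z'‖ ≤ 1 - ε := by
    rw [norm_smul, Real.norm_of_nonneg (by linarith)]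
    nlinarith
  have hseg : ∀ u : E, ‖u‖ = 1 → ∀ s ∈ Icc 0 ε, z' + s • u ∈ closedBall (0 : E) 1 := by
    intro u hu s hs
    rw [mem_closedBall_zero_iff]
    calc ‖z' + s • u‖ ≤ ‖z'‖ + ‖s • u‖ := norm_add_le _ _
      _ = ‖z'‖ + s := by rw [norm_smul s u, hu, mul_one, Real.norm_of_nonneg hs.1]
      _ ≤ 1 := by linarith [hs.2]
  have hz'mem : z' ∈ closedBall (0 : E) 1 := mem_closedBall_zero_iff.2 (by linarith)
  have hnear : ‖iteratedFDeriv ℝ (i + 1) f z'‖ ≤ 2 / ε * derivNormSup i f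
      + ε * derivNormSup (i + 2) f := by
    rw [← norm_fderiv_iteratedFDeriv]
    refine ContinuousLinearMap.opNorm_le_of_unit_norm (by positivity) fun u hu => ?_
    have hline : ∀ s : ℝ, HasDerivAt (fun s : ℝ => z' + s • u) u s := fun s => by
      simpa using ((hasDerivAt_id s).smul_const u).const_add z'
    have hdiff := hf.differentiable_iteratedFDeriv (m := i) (by exact_mod_cast (by omega : i < N))
    have hderiv : ∀ s : ℝ, HasDerivAt (fun s : ℝ => iteratedFDeriv ℝ i f (z' + s • u))
        (fderiv ℝ (iteratedFDeriv ℝ i f) (z' + s • u) u) s := fun s =>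
      (hdiff _).hasFDerivAt.comp_hasDerivAt s (hline s)
    have key := mul_norm_deriv_zero_le hε (fun s _ => (hderiv s).hasDerivWithinAt)
      (A := derivNormSup i f) (B := derivNormSup (i + 2) f * ε)
      (fun s hs => norm_iteratedFDeriv_le_derivNormSup hf (by omega) (hseg u hu s hs))
      (fun s hs => by
        rw [← sub_apply]
        refine (ContinuousLinearMap.le_opNorm_of_le _ hu.le).trans ?_
        rw [mul_one, norm_fderiv_iteratedFDeriv_sub]
        refine (norm_iteratedFDeriv_sub_le hf hi (hseg u hu s (Ico_subset_Icc_self hs))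
          (hseg u hu 0 (left_mem_Icc.2 hε.le))).trans ?_
        gcongr
        rw [add_sub_add_left_eq_sub, ← sub_smul, sub_zero, norm_smul, hu, mul_one,
          Real.norm_of_nonneg hs.1]
        exact hs.2.le)
    rw [zero_smul, add_zero] at key
    rw [div_mul_eq_mul_div, ← sub_le_iff_le_add, le_div_iff₀ hε]
    nlinarith
  have hfar : ‖iteratedFDeriv ℝ (i + 1) f z - iteratedFDeriv ℝ (i + 1) f z'‖
      ≤ ε * derivNormSup (i + 2) f := by
    refine (norm_iteratedFDeriv_sub_le hf hi hz hz'mem).trans ?_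
    have : z - z' = ε • z := by simp only [z', sub_smul, one_smul, sub_sub_cancel]
    rw [this, norm_smul, Real.norm_of_nonneg hε.le, mul_comm]
    gcongr
    nlinarith
  calc ‖iteratedFDeriv ℝ (i + 1) f z‖
      ≤ ‖iteratedFDeriv ℝ (i + 1) f z'‖
        + ‖iteratedFDeriv ℝ (i + 1) f z - iteratedFDeriv ℝ (i + 1) f z'‖ := norm_le_insert' _ _
    _ ≤ 2 / ε * derivNormSup i f + 2 * ε * derivNormSup (i + 2) f := by linarith

theorem derivNormSup_le_of_derivNormSup_zero_le_one {d : ℕ} (hf : ContDiff ℝ (d + 1 : ℕ) f)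
    (h0 : derivNormSup 0 f ≤ 1) {j : ℕ} (hj : j ≤ d + 1) :
    derivNormSup j f ≤ (16 ^ (d * d) + 4) ^ (d + 1) * (1 + derivNormSup (d + 1) f) :=
  le_of_interpolation (x := fun j => derivNormSup j f) (fun j => derivNormSup_nonneg j f) h0
    (fun _ hi _ hε hε1 => derivNormSup_succ_le hf (by omega) hε hε1) hj

end BallDerivatives

theorem partialMax_nonneg (n l : ℕ) (f : En n → ℝ) (z : En n) : 0 ≤ partialMax n l f z :=
  Real.iSup_nonneg fun _ => abs_nonneg _

theorem Ml_nonneg (n l : ℕ) (f : En n → ℝ) : 0 ≤ Ml n l f :=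
  Real.iSup_nonneg fun _ => partialMax_nonneg _ _ _ _

theorem sum_apply_smul_single {n : ℕ} (x : En n) :
    ∑ j, x j • EuclideanSpace.single j (1 : ℝ) = x := by
  simpa using (EuclideanSpace.basisFun (Fin n) ℝ).sum_repr x

theorem norm_iteratedFDeriv_le_pow_mul_partialMax {n : ℕ} (l : ℕ) (f : En n → ℝ) (z : En n) :
    ‖iteratedFDeriv ℝ l f z‖ ≤ n ^ l * partialMax n l f z := by
  set F := iteratedFDeriv ℝ l f z
  set e : (Fin l → Fin n) → Fin l → En n := fun r i => EuclideanSpace.single (r i) 1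
  have hP : ∀ r, |F (e r)| ≤ partialMax n l f z :=
    le_ciSup (Set.finite_range _).bddAbove
  have hP0 := partialMax_nonneg n l f z
  refine ContinuousMultilinearMap.opNorm_le_bound (by positivity) fun m => ?_
  classical
  calc ‖F m‖ = ‖∑ r, (∏ i, m i (r i)) • F (e r)‖ := by
        conv_lhs => rw [← funext fun i => sum_apply_smul_single (m i)]
        rw [F.map_sum]
        simp only [F.map_smul_univ, e]
    _ ≤ ∑ r : Fin l → Fin n, (∏ i, |m i (r i)|) * partialMax n l f z := by
        refine (norm_sum_le _ _).trans (Finset.sum_le_sum fun r _ => ?_)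
        rw [norm_smul, Real.norm_eq_abs, Real.norm_eq_abs, Finset.abs_prod]
        exact mul_le_mul_of_nonneg_left (hP r) (by positivity)
    _ = partialMax n l f z * ∏ i, ∑ j, |m i j| := by
        rw [← Finset.sum_mul, Fintype.prod_sum, mul_comm]
    _ ≤ partialMax n l f z * ∏ i, (n * ‖m i‖) := by
        gcongr with i
        calc ∑ j, |m i j| ≤ ∑ _j : Fin n, ‖m i‖ := Finset.sum_le_sum fun j _ => by
              simpa only [Real.norm_eq_abs] using PiLp.norm_apply_le (m i) j
          _ = n * ‖m i‖ := by simp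
    _ = n ^ l * partialMax n l f z * ∏ i, ‖m i‖ := by
        rw [Finset.prod_mul_distrib, Finset.prod_const, Finset.card_univ, Fintype.card_fin]; ring

theorem partialMax_le_norm_iteratedFDeriv {n : ℕ} (l : ℕ) (f : En n → ℝ) (z : En n) :
    partialMax n l f z ≤ ‖iteratedFDeriv ℝ l f z‖ :=
  Real.iSup_le (fun α => by
    rw [← Real.norm_eq_abs]
    refine ((iteratedFDeriv ℝ l f z).le_opNorm _).trans ?_
    simp) (norm_nonneg _)

theorem derivNormSup_le_pow_mul_Ml {n N l : ℕ} {f : En n → ℝ} (hf : ContDiff ℝ N f) (hl : l ≤ N) :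
    derivNormSup l f ≤ n ^ l * Ml n l f := by
  have hbdd : BddAbove (range fun z : closedBall (0 : En n) 1 => partialMax n l f z) :=
    ⟨derivNormSup l f, by
      rintro _ ⟨z, rfl⟩
      exact (partialMax_le_norm_iteratedFDeriv l f z).trans
        (norm_iteratedFDeriv_le_derivNormSup hf hl z.2)⟩
  have hM := Ml_nonneg n l f
  exact Real.iSup_le (fun z => (norm_iteratedFDeriv_le_pow_mul_partialMax l f z).trans
    (mul_le_mul_of_nonneg_left (le_ciSup hbdd z) (by positivity))) (by positivity)

theorem norm_le_sqrt_mul_iSup_abs {n : ℕ} (x : En n) : ‖x‖ ≤ √n * ⨆ i, |x i| := by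
  simpa only [EuclideanSpace.basisFun_inner, Real.norm_eq_abs, Fintype.card_fin] using
    (EuclideanSpace.basisFun (Fin n) ℝ).norm_le_card_mul_iSup_norm_inner x

theorem curveDer_le_norm {n k : ℕ} (ω : ℝ → En n) (t : ℝ) :
    curveDer n k ω t ≤ ‖iteratedDeriv k ω t‖ :=
  Real.iSup_le (fun i => (Real.norm_eq_abs _).symm.trans_le (PiLp.norm_apply_le _ i))
    (norm_nonneg _)

theorem norm_iteratedDeriv_le_sqrt_mul_curveDer {n k : ℕ} (ω : ℝ → En n) (t : ℝ) :
    ‖iteratedDeriv k ω t‖ ≤ √n * curveDer n k ω t :=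
  norm_le_sqrt_mul_iSup_abs _

theorem curveDer_le_nuCurve {n d k : ℕ} {ω : ℝ → En n} (hω : ContDiff ℝ (d + 1 : ℕ) ω) {t : ℝ}
    (ht : t ∈ Icc (-1 : ℝ) 1) (hk₂ : 2 ≤ k) (hk : k ≤ d + 1) :
    curveDer n k ω t ≤ nuCurve n d ω := by
  set S : ℝ → ℝ := fun t => ∑ j ∈ Finset.range (d + 2), ‖iteratedDeriv j ω t‖
  have hS : ∀ t, ∀ j ≤ d + 1, curveDer n j ω t ≤ S t := fun t j hj =>
    (curveDer_le_norm ω t).trans <| Finset.single_le_sum (f := fun j => ‖iteratedDeriv j ω t‖)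
      (fun j _ => norm_nonneg _) (Finset.mem_range.2 (by omega))
  have hnuAt : ∀ t, nuAt n d ω t ≤ S t := fun t =>
    Real.iSup_le (fun k => hS t k k.2.2) (Finset.sum_nonneg fun j _ => norm_nonneg _)
  have hScont : Continuous S := continuous_finsetSum _ fun j hj =>
    (hω.continuous_iteratedDeriv j (by exact_mod_cast Finset.mem_range_succ_iff.1 hj)).norm
  obtain ⟨b, hb⟩ := isCompact_Icc.bddAbove_image hScont.continuousOn
  calc curveDer n k ω t ≤ nuAt n d ω t :=
        le_ciSup (f := fun k : {k : ℕ // 2 ≤ k ∧ k ≤ d + 1} => curveDer n k ω t)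
          ⟨S t, by rintro _ ⟨k, rfl⟩; exact hS t k k.2.2⟩ ⟨k, hk₂, hk⟩
    _ ≤ nuCurve n d ω :=
        le_ciSup (f := fun t : Icc (-1 : ℝ) 1 => nuAt n d ω t)
          ⟨b, by rintro _ ⟨t, rfl⟩; exact (hnuAt t).trans (hb ⟨t, t.2, rfl⟩)⟩ ⟨t, ht⟩

theorem OrderedFinpartition.length_eq_of_partSize_eq_one {m : ℕ} (c : OrderedFinpartition m)
    (h : ∀ i, c.partSize i = 1) : c.length = m := by
  simpa [Fintype.card_sigma, h] using Fintype.card_congr c.equivSigma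

section FaaDiBruno

variable {E F : Type*} [NormedAddCommGroup E] [NormedSpace ℝ E] [NormedAddCommGroup F]
  [NormedSpace ℝ F] {f : E → F} {ω : ℝ → E}

theorem iteratedDeriv_comp_eq_sum {N : WithTop ℕ∞} (hf : ContDiff ℝ N f) (hω : ContDiff ℝ N ω)
    {k : ℕ} (hk : k ≤ N) (t : ℝ) :
    iteratedDeriv k (f ∘ ω) t = ∑ c : OrderedFinpartition k,
      iteratedFDeriv ℝ c.length f (ω t) fun m => iteratedDeriv (c.partSize m) ω t := by
  rw [iteratedDeriv_eq_iteratedFDeriv, iteratedFDeriv_comp hf.contDiffAt hω.contDiffAt hk]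
  rw [FormalMultilinearSeries.taylorComp, sum_apply]
  rfl

theorem norm_iteratedDeriv_comp_le {d : ℕ} (hf : ContDiff ℝ (d + 1 : ℕ) f)
    (hω : ContDiff ℝ (d + 1 : ℕ) ω) (t : ℝ) {a δ A T : ℝ} (hδ₀ : 0 ≤ δ) (hδ₁ : δ ≤ 1)
    (hω₁ : ‖iteratedDeriv 1 ω t‖ ≤ a)
    (hω₂ : ∀ k, 2 ≤ k → k ≤ d + 1 → ‖iteratedDeriv k ω t‖ ≤ a * δ)
    (hfA : ∀ j ≤ d + 1, ‖iteratedFDeriv ℝ j f (ω t)‖ ≤ A)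
    (hfT : ‖iteratedFDeriv ℝ (d + 1) f (ω t)‖ ≤ T) :
    ‖iteratedDeriv (d + 1) (f ∘ ω) t‖ ≤
      (∑ c : OrderedFinpartition (d + 1), a ^ c.length) * (T + A * δ) := by
  have ha : 0 ≤ a := (norm_nonneg _).trans hω₁
  have hA : 0 ≤ A := (norm_nonneg _).trans (hfA 0 (Nat.zero_le _))
  have hT : 0 ≤ T := (norm_nonneg _).trans hfT
  rw [iteratedDeriv_comp_eq_sum hf hω le_rfl, Finset.sum_mul]
  refine (norm_sum_le _ _).trans (Finset.sum_le_sum fun c _ => ?_)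
  set v : Fin c.length → E := fun m => iteratedDeriv (c.partSize m) ω t
  have hv : ∀ m, ‖v m‖ ≤ a := fun m => by
    by_cases h : c.partSize m = 1
    · simpa only [v, h] using hω₁
    · exact (hω₂ _ (by have := c.partSize_pos m; omega) (c.partSize_le m)).trans
        (mul_le_of_le_one_right ha hδ₁)
  refine ((iteratedFDeriv ℝ c.length f (ω t)).le_opNorm v).trans ?_
  by_cases hsingle : ∀ m, c.partSize m = 1
  · have hlen := c.length_eq_of_partSize_eq_one hsingle
    have hprod : ∏ m, ‖v m‖ ≤ a ^ c.length :=
      calc ∏ m, ‖v m‖ ≤ ∏ _m : Fin c.length, a :=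
            Finset.prod_le_prod (fun m _ => norm_nonneg _) fun m _ => hv m
        _ = a ^ c.length := by rw [Finset.prod_const, Finset.card_univ, Fintype.card_fin]
    calc _ ≤ T * a ^ c.length := by
          gcongr
          rw [hlen]
          exact hfT
      _ ≤ _ := by nlinarith [pow_nonneg ha c.length, mul_nonneg hA hδ₀]
  · obtain ⟨m₀, hm₀⟩ := not_forall.1 hsingle
    have hprod : ∏ m, ‖v m‖ ≤ δ * a ^ c.length := by
      calc ∏ m, ‖v m‖ ≤ ∏ m, (if m = m₀ then δ else 1) * a :=
            Finset.prod_le_prod (fun m _ => norm_nonneg _) fun m _ => by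
              split_ifs with h
              · subst h
                exact hω₂ _ (by have := c.partSize_pos m; omega) (c.partSize_le _) |>.trans_eq
                  (mul_comm _ _)
              · simpa using hv m
        _ = δ * a ^ c.length := by
          rw [Finset.prod_mul_distrib, Finset.prod_ite_eq', if_pos (Finset.mem_univ _),
            Finset.prod_const, Finset.card_univ, Fintype.card_fin]
    calc _ ≤ A * (δ * a ^ c.length) := by gcongr; exact hfA _ c.length_le
      _ ≤ _ := by nlinarith [pow_nonneg ha c.length, mul_nonneg hA hδ₀]

end FaaDiBruno

theorem MIcc_comp_le {n d : ℕ} {f : En n → ℝ} {ω : ℝ → En n} (hf : ContDiff ℝ (d + 1 : ℕ) f)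
    (hM₀ : Ml n 0 f = 1) (hω : ContDiff ℝ (d + 1 : ℕ) ω)
    (hball : ∀ t ∈ Icc (-1 : ℝ) 1, ω t ∈ closedBall (0 : En n) 1)
    (hspeed : ∀ t ∈ Icc (-1 : ℝ) 1, curveDer n 1 ω t ≤ 1) {δ : ℝ} (hδ₀ : 0 ≤ δ) (hδ₁ : δ ≤ 1)
    (hν : nuCurve n d ω ≤ δ) :
    MIcc (d + 1) (fun u => f (ω u)) ≤ (∑ c : OrderedFinpartition (d + 1), √n ^ c.length) *
      (derivNormSup (d + 1) f +
        (16 ^ (d * d) + 4) ^ (d + 1) * (1 + derivNormSup (d + 1) f) * δ) := by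
  have h0 : derivNormSup 0 f ≤ 1 := by
    simpa [hM₀] using derivNormSup_le_pow_mul_Ml hf (Nat.zero_le _)
  have hT₀ := derivNormSup_nonneg (d + 1) f
  refine Real.iSup_le (fun ⟨t, ht⟩ => ?_) (by positivity)
  rw [← Real.norm_eq_abs]
  exact norm_iteratedDeriv_comp_le hf hω t hδ₀ hδ₁
    ((norm_iteratedDeriv_le_sqrt_mul_curveDer ω t).trans
      (mul_le_of_le_one_right (Real.sqrt_nonneg _) (hspeed t ht)))
    (fun k hk₂ hk => (norm_iteratedDeriv_le_sqrt_mul_curveDer ω t).trans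
      (by gcongr; exact (curveDer_le_nuCurve hω ht hk₂ hk).trans hν))
    (fun j hj => (norm_iteratedFDeriv_le_derivNormSup hf hj (hball t ht)).trans
      (derivNormSup_le_of_derivNormSup_zero_le_one hf h0 hj))
    (norm_iteratedFDeriv_le_derivNormSup hf le_rfl (hball t ht))

theorem stmt11_general (n d : ℕ) :
    ∃ C₁ C₃ : ℝ, 0 < C₁ ∧ 0 < C₃ ∧
      ∀ f : En n → ℝ, ContDiff ℝ (d + 1 : ℕ) f → Ml n 0 f = 1 →
        ∀ ω : ℝ → En n, ContDiff ℝ (d + 1 : ℕ) ω →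
          (∀ t ∈ Set.Icc (-1 : ℝ) 1, ω t ∈ Metric.closedBall (0 : En n) 1) →
          (∀ t ∈ Set.Icc (-1 : ℝ) 1, 0 < curveDer n 1 ω t ∧ curveDer n 1 ω t ≤ 1) →
          nuCurve n d ω ≤ C₃ →
          Ml n (d + 1) f ≥ 1 / 2 * C₁ * (MIcc (d + 1) (fun u => f (ω u)) - 1 / 10) := by
  set K : ℝ := (16 ^ (d * d) + 4) ^ (d + 1)
  set S : ℝ := ∑ c : OrderedFinpartition (d + 1), √n ^ c.length
  set B : ℝ := (S + 1) * n ^ (d + 1)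
  set C₃ : ℝ := 1 / (20 * (S * K + 1))
  have hC₃ : C₃ ≤ 1 := by
    rw [div_le_one (by positivity)]
    nlinarith [mul_nonneg (by positivity : 0 ≤ S) (by positivity : 0 ≤ K)]
  have hSKC₃ : S * K * C₃ ≤ 1 / 20 := by
    rw [mul_one_div, div_le_div_iff₀ (by positivity) (by norm_num)]
    linarith
  refine ⟨1 / (B + 1), C₃, by positivity, by positivity, ?_⟩
  intro f hf hM₀ ω hω hball hspeed hν
  set T := derivNormSup (d + 1) f
  set P := Ml n (d + 1) f
  have hT₀ : 0 ≤ T := derivNormSup_nonneg _ _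
  have hP₀ : 0 ≤ P := Ml_nonneg _ _ _
  have hg : MIcc (d + 1) (fun u => f (ω u)) ≤ 1 / 20 + B * P :=
    calc _ ≤ S * (T + K * (1 + T) * C₃) :=
          MIcc_comp_le hf hM₀ hω hball (fun t ht => (hspeed t ht).2) (by positivity) hC₃ hν
      _ = S * T + S * K * C₃ * (1 + T) := by ring
      _ ≤ S * T + 1 / 20 * (1 + T) := by gcongr
      _ ≤ 1 / 20 + (S + 1) * T := by linarith
      _ ≤ 1 / 20 + (S + 1) * (n ^ (d + 1) * P) := by
          gcongr
          exact derivNormSup_le_pow_mul_Ml hf le_rfl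
      _ = 1 / 20 + B * P := by ring
  have hBP : 0 ≤ B * P := mul_nonneg (by positivity) hP₀
  have hB₁ : B + 1 ≠ 0 := by positivity
  calc 1 / 2 * (1 / (B + 1)) * (MIcc (d + 1) (fun u => f (ω u)) - 1 / 10)
      ≤ 1 / 2 * (1 / (B + 1)) * (2 * (B + 1) * P) := by gcongr; linarith
    _ = P := by field_simp

/-- there are `C₁(n,d), C₃(n,d) > 0` such that for every `C^{d+1}` function `f`
on `B^n` with `M_0(f) = 1` and every admissible curve `ω` with `ν_d(ω) ≤ C₃`, with
`g = f ∘ ω`, `M_{d+1}(f) ≥ (1/2)·C₁·(M_{d+1}(g) − 1/10)`. -/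
theorem stmt11 (n d : ℕ) (hn : 1 ≤ n) (hd : 1 ≤ d) :
    ∃ C₁ C₃ : ℝ, 0 < C₁ ∧ 0 < C₃ ∧
      ∀ f : En n → ℝ, ContDiff ℝ (d + 1 : ℕ) f → Ml n 0 f = 1 →
        ∀ ω : ℝ → En n, ContDiff ℝ (d + 1 : ℕ) ω →
          (∀ t ∈ Set.Icc (-1 : ℝ) 1, ω t ∈ Metric.closedBall (0 : En n) 1) →
          (∀ t ∈ Set.Icc (-1 : ℝ) 1, 0 < curveDer n 1 ω t ∧ curveDer n 1 ω t ≤ 1) →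
          nuCurve n d ω ≤ C₃ →
          Ml n (d + 1) f ≥ 1 / 2 * C₁ * (MIcc (d + 1) (fun u => f (ω u)) - 1 / 10) :=
  stmt11_general n d
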